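/- Let n ≥ 1 and λ > 0, let E_λ ⊂ L²(𝕋ⁿ) be the (finite-dimensional) span of the exponentials {e^{i k·x} : k ∈ ℤⁿ, ‖k‖ = λ}, and let (ψ_j)_{j∈J} be an orthonormal basis of E_λ. Then for every a ∈ L²(𝕋ⁿ), writing â_p = (2π)^{-n} ∫_{𝕋ⁿ} a(x) e^{-i p·x} dx for its Fourier coefficients, one has Σ_{j∈J} |∫_{𝕋ⁿ} a(x)|ψ_j(x)|² dx − â_0|² ≤ (2π)ⁿ Σ_{p∈ℤⁿ, p≠0} |â_p|² · #{k ∈ ℤⁿ : ‖k‖ = λ and ‖k + p‖ = λ}. -/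

import Mathlib

open MeasureTheory Filter Topology

/-- Euclidean inner product on `Fin n → ℝ`. -/
noncomputable def dotp {n : ℕ} (v w : Fin n → ℝ) : ℝ := ∑ i, v i * w i

/-- Euclidean norm on `Fin n → ℝ`. -/
noncomputable def euclNorm {n : ℕ} (v : Fin n → ℝ) : ℝ := Real.sqrt (∑ i, (v i)^2)

/-- The fundamental domain `[0, 2π]ⁿ` of the flat torus `ℝⁿ/(2πℤ)ⁿ`. -/
noncomputable def torusBox (n : ℕ) : Set (Fin n → ℝ) :=
  Set.univ.pi fun _ => Set.Icc 0 (2*Real.pi)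

/-- The trigonometric polynomial `x ↦ ∑_{k ∈ F} c_k e^{i k·x}`. -/
noncomputable def eigenSum {n : ℕ} (F : Finset (Fin n → ℤ)) (c : (Fin n → ℤ) → ℂ)
    (x : Fin n → ℝ) : ℂ :=
  ∑ k ∈ F, c k * Complex.exp (Complex.I * (dotp (fun i => (k i : ℝ)) x : ℝ))

/-- The `p`-th Fourier coefficient `â_p = (2π)^{-n} ∫_{𝕋ⁿ} a(x) e^{-i p·x} dx`. -/
noncomputable def fourierCoeff' {n : ℕ} (a : (Fin n → ℝ) → ℂ) (p : Fin n → ℤ) : ℂ :=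
  (((2*Real.pi)^n : ℝ) : ℂ)⁻¹ *
    ∫ x in torusBox n, a x * Complex.exp (-Complex.I * (dotp (fun i => (p i : ℝ)) x : ℝ))

/-!
Write `ψ_j = ∑_{k ∈ F} c_j(k) e^{ik·x}`. Then `∫ a ψ_j conj ψ_{j'} = (U A Uᴴ)_{jj'}` with the
Toeplitz matrix `A_{kk'} = â_{k'-k}` and `U = (2π)^{n/2} c`. For `a = 1` we get `A = 1`, so
orthonormality says `U Uᴴ = 1`, and completeness makes `U` square, hence unitary. Then
`∫ a |ψ_j|² - â_0 = (U M Uᴴ)_{jj}` with `M = A - â_0 • 1`, and the squared diagonal entries of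
`U M Uᴴ` sum to at most its squared Hilbert–Schmidt norm, which equals that of `M`, namely
`∑_{k ≠ k'} |â_{k'-k}|²`. Grouping the pairs by `p = k' - k` produces the count; the factor
`(2π)ⁿ ≥ 1` is slack.
-/

open scoped Matrix

noncomputable def torusChar {n : ℕ} (m : Fin n → ℤ) (x : Fin n → ℝ) : ℂ :=
  Complex.exp (Complex.I * (dotp (fun i => (m i : ℝ)) x : ℝ))

lemma volume_restrict_torusBox (n : ℕ) :
    volume.restrict (torusBox n)
      = Measure.pi fun _ : Fin n => volume.restrict (Set.Icc 0 (2 * Real.pi)) := by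
  refine (Measure.pi_eq fun s hs => ?_).symm
  rw [Measure.restrict_apply (MeasurableSet.univ_pi hs), torusBox, ← Set.pi_inter_distrib,
    volume_pi, Measure.pi_pi]
  exact Finset.prod_congr rfl fun i _ => (Measure.restrict_apply (hs i)).symm

lemma isCompact_torusBox (n : ℕ) : IsCompact (torusBox n) :=
  isCompact_univ_pi fun _ => isCompact_Icc

instance (n : ℕ) : IsFiniteMeasure (volume.restrict (torusBox n)) :=
  isFiniteMeasure_restrict.2 (isCompact_torusBox n).measure_lt_top.ne

lemma integral_torusBox_prod (n : ℕ) (f : Fin n → ℝ → ℂ) :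
    ∫ x in torusBox n, ∏ i, f i (x i) = ∏ i, ∫ t in Set.Icc 0 (2 * Real.pi), f i t := by
  rw [volume_restrict_torusBox]
  exact integral_fintype_prod_eq_prod f

lemma integral_exp_int_mul_Icc (m : ℤ) :
    ∫ t in Set.Icc 0 (2 * Real.pi), Complex.exp (Complex.I * ((m * t : ℝ) : ℂ))
      = if m = 0 then ((2 * Real.pi : ℝ) : ℂ) else 0 := by
  have h2pi : (0 : ℝ) ≤ 2 * Real.pi := by positivity
  split_ifs with hm
  · simp [hm, h2pi]
  · have hIm : Complex.I * m ≠ 0 := mul_ne_zero Complex.I_ne_zero (Int.cast_ne_zero.2 hm)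
    simp_rw [Complex.ofReal_mul, Complex.ofReal_intCast, ← mul_assoc]
    rw [integral_Icc_eq_integral_Ioc, ← intervalIntegral.integral_of_le h2pi,
      integral_exp_mul_complex hIm]
    have hper : Complex.I * m * ((2 * Real.pi : ℝ) : ℂ) = m * (2 * Real.pi * Complex.I) := by
      push_cast; ring
    rw [hper, Complex.exp_int_mul_two_pi_mul_I]
    simp

lemma torusChar_eq_prod {n : ℕ} (m : Fin n → ℤ) (x : Fin n → ℝ) :
    torusChar m x = ∏ i, Complex.exp (Complex.I * ((m i * x i : ℝ) : ℂ)) := by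
  rw [torusChar, ← Complex.exp_sum, ← Finset.mul_sum, dotp]
  push_cast
  rfl

lemma integral_torusChar {n : ℕ} (m : Fin n → ℤ) :
    ∫ x in torusBox n, torusChar m x = if m = 0 then (((2 * Real.pi) ^ n : ℝ) : ℂ) else 0 := by
  simp_rw [torusChar_eq_prod]
  rw [integral_torusBox_prod n fun i t => Complex.exp (Complex.I * ((m i * t : ℝ) : ℂ))]
  simp_rw [integral_exp_int_mul_Icc]
  split_ifs with hm
  · simp [hm]
  · obtain ⟨i, hi⟩ := Function.ne_iff.1 hm
    exact Finset.prod_eq_zero (Finset.mem_univ i) (if_neg hi)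

lemma torusChar_mul_conj {n : ℕ} (k k' : Fin n → ℤ) (x : Fin n → ℝ) :
    torusChar k x * (starRingEnd ℂ) (torusChar k' x) = torusChar (k - k') x := by
  simp only [torusChar, ← Complex.exp_conj, ← Complex.exp_add, map_mul, Complex.conj_I,
    Complex.conj_ofReal, dotp, Pi.sub_apply]
  push_cast
  simp only [sub_mul, Finset.sum_sub_distrib]
  ring_nf

lemma continuous_torusChar {n : ℕ} (m : Fin n → ℤ) : Continuous (torusChar m) := by
  unfold torusChar dotp
  fun_prop

lemma norm_torusChar {n : ℕ} (m : Fin n → ℤ) (x : Fin n → ℝ) : ‖torusChar m x‖ = 1 := by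
  simp [torusChar, Complex.norm_exp]

lemma integral_mul_torusChar {n : ℕ} (a : (Fin n → ℝ) → ℂ) (m : Fin n → ℤ) :
    ∫ x in torusBox n, a x * torusChar m x
      = (((2 * Real.pi) ^ n : ℝ) : ℂ) * fourierCoeff' a (-m) := by
  have hchar : ∀ x, Complex.exp (-Complex.I * (dotp (fun i => ((-m) i : ℝ)) x : ℝ))
      = torusChar m x := by
    intro x
    simp only [torusChar, dotp, Pi.neg_apply, Int.cast_neg, neg_mul, Finset.sum_neg_distrib,
      Complex.ofReal_neg, mul_neg, neg_neg]
  have h2pi : (((2 * Real.pi) ^ n : ℝ) : ℂ) ≠ 0 := by norm_cast; positivity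
  simp_rw [fourierCoeff', hchar, mul_inv_cancel_left₀ h2pi]

lemma fourierCoeff'_one {n : ℕ} (p : Fin n → ℤ) :
    fourierCoeff' (fun _ => 1) p = if p = 0 then 1 else 0 := by
  have h := integral_mul_torusChar (fun _ => 1) (-p)
  have h2pi : (((2 * Real.pi) ^ n : ℝ) : ℂ) ≠ 0 := by norm_cast; positivity
  rw [neg_neg] at h
  simp only [one_mul, integral_torusChar, neg_eq_zero] at h
  split_ifs at h ⊢
  · exact (mul_eq_left₀ h2pi).1 h.symm
  · exact ((mul_eq_zero.1 h.symm).resolve_left h2pi)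

lemma eigenSum_mul_conj {n : ℕ} (F : Finset (Fin n → ℤ)) (c c' : (Fin n → ℤ) → ℂ)
    (x : Fin n → ℝ) :
    eigenSum F c x * (starRingEnd ℂ) (eigenSum F c' x)
      = ∑ k ∈ F, ∑ k' ∈ F, c k * (starRingEnd ℂ) (c' k') * torusChar (k - k') x := by
  change (∑ k ∈ F, c k * torusChar k x) * (starRingEnd ℂ) (∑ k' ∈ F, c' k' * torusChar k' x) = _
  simp_rw [map_sum, Finset.sum_mul_sum, map_mul, ← torusChar_mul_conj]
  refine Finset.sum_congr rfl fun k _ => Finset.sum_congr rfl fun k' _ => ?_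
  ring

lemma integral_mul_eigenSum_mul_conj {n : ℕ} {a : (Fin n → ℝ) → ℂ}
    (ha : Integrable a (volume.restrict (torusBox n))) (F : Finset (Fin n → ℤ))
    (c c' : (Fin n → ℤ) → ℂ) :
    ∫ x in torusBox n, a x * (eigenSum F c x * (starRingEnd ℂ) (eigenSum F c' x))
      = (((2 * Real.pi) ^ n : ℝ) : ℂ) *
          ∑ k ∈ F, ∑ k' ∈ F, c k * (starRingEnd ℂ) (c' k') * fourierCoeff' a (k' - k) := by
  have hint : ∀ m, Integrable (fun x => a x * torusChar m x) (volume.restrict (torusBox n)) :=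
    fun m => ha.mul_bdd (continuous_torusChar m).aestronglyMeasurable
      (Eventually.of_forall fun x => (norm_torusChar m x).le)
  simp_rw [eigenSum_mul_conj, Finset.mul_sum, mul_left_comm (a _)]
  rw [integral_finsetSum _ fun k _ => integrable_finsetSum _ fun k' _ =>
    (hint (k - k')).const_mul (c k * (starRingEnd ℂ) (c' k'))]
  refine Finset.sum_congr rfl fun k _ => ?_
  rw [integral_finsetSum _ fun k' _ => (hint (k - k')).const_mul (c k * (starRingEnd ℂ) (c' k'))]
  refine Finset.sum_congr rfl fun k' _ => ?_
  rw [integral_const_mul, integral_mul_torusChar, neg_sub]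
  ring

section HilbertSchmidt

variable {𝕜 ι κ : Type*} [RCLike 𝕜] [Fintype ι] [Fintype κ]

lemma Matrix.sum_sum_norm_sq_eq_re_trace (B : Matrix ι κ 𝕜) :
    ∑ i, ∑ j, ‖B i j‖ ^ 2 = RCLike.re (Bᴴ * B).trace := by
  simp only [Matrix.trace, Matrix.diag, Matrix.mul_apply, Matrix.conjTranspose_apply,
    RCLike.star_def, RCLike.conj_mul, map_sum]
  rw [Finset.sum_comm]
  norm_cast

lemma Matrix.sum_norm_sq_diag_mul_mul_conjTranspose_le [DecidableEq κ] {U : Matrix ι κ 𝕜}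
    (hU : Uᴴ * U = 1) (M : Matrix κ κ 𝕜) :
    ∑ j, ‖(U * M * Uᴴ) j j‖ ^ 2 ≤ ∑ k, ∑ k', ‖M k k'‖ ^ 2 := by
  have hconj : (U * M * Uᴴ)ᴴ * (U * M * Uᴴ) = U * (Mᴴ * M) * Uᴴ := by
    simp only [Matrix.conjTranspose_mul, Matrix.conjTranspose_conjTranspose, Matrix.mul_assoc]
    rw [← Matrix.mul_assoc Uᴴ U, hU, Matrix.one_mul]
  have htrace : (U * (Mᴴ * M) * Uᴴ).trace = (Mᴴ * M).trace := by
    rw [Matrix.trace_mul_comm, ← Matrix.mul_assoc, hU, Matrix.one_mul]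
  calc ∑ j, ‖(U * M * Uᴴ) j j‖ ^ 2
      ≤ ∑ j, ∑ j', ‖(U * M * Uᴴ) j j'‖ ^ 2 :=
        Finset.sum_le_sum fun j _ => Finset.single_le_sum (f := fun j' => ‖(U * M * Uᴴ) j j'‖ ^ 2)
          (fun _ _ => by positivity) (Finset.mem_univ j)
    _ = ∑ k, ∑ k', ‖M k k'‖ ^ 2 := by
        rw [Matrix.sum_sum_norm_sq_eq_re_trace, Matrix.sum_sum_norm_sq_eq_re_trace, hconj, htrace]

end HilbertSchmidt

section Differences

open Finset

variable {G : Type*} [AddCommGroup G] [DecidableEq G]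

lemma Finset.card_filter_offDiag_sub_eq (F : Finset G) {p : G} (hp : p ≠ 0) :
    #{q ∈ F.offDiag | q.2 - q.1 = p} = #{k ∈ F | k + p ∈ F} := by
  refine card_nbij' Prod.fst (fun k => (k, k + p)) ?_ ?_ ?_ ?_
  · intro q hq
    simp only [coe_filter, mem_offDiag, Set.mem_ofPred_eq] at hq ⊢
    obtain ⟨⟨h1, h2, -⟩, rfl⟩ := hq
    simpa [h1] using h2
  · intro k hk
    simp only [coe_filter, mem_offDiag, Set.mem_ofPred_eq] at hk ⊢
    simpa [hk.1, hk.2] using hp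
  · intro q hq
    simp only [coe_filter, Set.mem_ofPred_eq] at hq
    ext <;> simp [← hq.2]
  · intro k _
    rfl

lemma Finset.sum_offDiag_sub_eq_tsum (F : Finset G) (g : G → ℝ) :
    ∑ q ∈ F.offDiag, g (q.2 - q.1)
      = ∑' p : {p : G // p ≠ 0}, g p * #{k ∈ F | k + p.1 ∈ F} := by
  set D := F.offDiag.image fun q => q.2 - q.1
  have hD : ∀ p ∈ D, p ≠ 0 := by
    simp only [D, mem_image, mem_offDiag]
    rintro p ⟨q, ⟨-, -, hq⟩, rfl⟩
    exact sub_ne_zero.2 (Ne.symm hq)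
  have hvanish : ∀ p : {p : G // p ≠ 0}, p ∉ D.subtype (· ≠ 0) →
      g p * #{k ∈ F | k + p.1 ∈ F} = 0 := by
    intro p hp
    rw [mem_subtype] at hp
    suffices #{k ∈ F | k + p.1 ∈ F} = 0 by simp [this]
    refine card_eq_zero.2 (filter_eq_empty_iff.2 fun k hk hkp => hp ?_)
    refine mem_image.2 ⟨(k, k + p.1), ?_, add_sub_cancel_left k p.1⟩
    simpa [hk, hkp] using p.2
  rw [sum_comp, tsum_eq_sum hvanish,
    sum_subtype_of_mem (fun p => g p * (#{k ∈ F | k + p ∈ F} : ℝ)) hD]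
  refine sum_congr rfl fun p hp => ?_
  rw [Finset.card_filter_offDiag_sub_eq F (hD p hp), nsmul_eq_mul, mul_comm]

end Differences

section Eigenspace

variable {n : ℕ} (F : Finset (Fin n → ℤ))

noncomputable def coeffMatrix {ι : Type*} (c : ι → (Fin n → ℤ) → ℂ) : Matrix ι F ℂ :=
  Matrix.of fun j k => (Real.sqrt ((2 * Real.pi) ^ n) : ℂ) * c j k

noncomputable def fourierMatrix (a : (Fin n → ℝ) → ℂ) : Matrix F F ℂ :=
  Matrix.of fun k k' => fourierCoeff' a (k'.1 - k.1)

lemma fourierMatrix_one : fourierMatrix F (fun _ => 1) = 1 := by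
  ext k k'
  simp only [fourierMatrix, Matrix.of_apply, fourierCoeff'_one, Matrix.one_apply, sub_eq_zero,
    ← Subtype.ext_iff]
  split_ifs <;> simp_all [eq_comm]

lemma coeffMatrix_mul_fourierMatrix_mul_conjTranspose {ι : Type*} [Fintype ι]
    {a : (Fin n → ℝ) → ℂ} (ha : Integrable a (volume.restrict (torusBox n)))
    (c : ι → (Fin n → ℤ) → ℂ) :
    coeffMatrix F c * fourierMatrix F a * (coeffMatrix F c)ᴴ
      = Matrix.of fun j j' =>
          ∫ x in torusBox n,
            a x * (eigenSum F (c j) x * (starRingEnd ℂ) (eigenSum F (c j') x)) := by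
  have hsqrt : (Real.sqrt ((2 * Real.pi) ^ n) : ℂ) * Real.sqrt ((2 * Real.pi) ^ n)
      = (((2 * Real.pi) ^ n : ℝ) : ℂ) := by
    rw [← Complex.ofReal_mul, Real.mul_self_sqrt (by positivity)]
  ext j j'
  rw [Matrix.of_apply, integral_mul_eigenSum_mul_conj ha, ← hsqrt, ← F.sum_coe_sort]
  simp only [Matrix.mul_apply, coeffMatrix, fourierMatrix, Matrix.of_apply,
    Matrix.conjTranspose_apply, RCLike.star_def, map_mul, Complex.conj_ofReal, Finset.sum_mul,
    Finset.mul_sum]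
  rw [Finset.sum_comm]
  refine Finset.sum_congr rfl fun k _ => ?_
  rw [← F.sum_coe_sort]
  refine Finset.sum_congr rfl fun k' _ => ?_
  ring

lemma sum_sum_norm_sq_fourierMatrix_sub_smul_one (a : (Fin n → ℝ) → ℂ) :
    ∑ k, ∑ k', ‖(fourierMatrix F a - fourierCoeff' a 0 • 1) k k'‖ ^ 2
      = ∑ q ∈ F.offDiag, ‖fourierCoeff' a (q.2 - q.1)‖ ^ 2 := by
  have hentry : ∀ k k' : F, ‖(fourierMatrix F a - fourierCoeff' a 0 • 1) k k'‖ ^ 2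
      = if k.1 = k'.1 then 0 else ‖fourierCoeff' a (k'.1 - k.1)‖ ^ 2 := by
    intro k k'
    by_cases h : k = k'
    · subst h
      simp [fourierMatrix]
    · simp [fourierMatrix, Matrix.one_apply_ne h, Subtype.coe_injective.ne h]
  have hoffDiag : (F ×ˢ F).filter (fun q => q.1 ≠ q.2) = F.offDiag := by
    ext q
    simp [and_assoc]
  rw [← hoffDiag, Finset.sum_filter, Finset.sum_product, ← F.sum_coe_sort]
  refine Finset.sum_congr rfl fun k _ => ?_
  rw [← F.sum_coe_sort]
  refine Finset.sum_congr rfl fun k' _ => ?_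
  rw [hentry, ite_not]

lemma ncard_sphere_inter_translate_eq_card_filter {lam : ℝ}
    (hF : ∀ k : Fin n → ℤ, k ∈ F ↔ euclNorm (fun i => (k i : ℝ)) = lam) (p : Fin n → ℤ) :
    {k : Fin n → ℤ | euclNorm (fun i => (k i : ℝ)) = lam ∧
      euclNorm (fun i => ((k i + p i : ℤ) : ℝ)) = lam}.ncard = (F.filter (· + p ∈ F)).card := by
  rw [← Set.ncard_coe_finset]
  congr 1
  ext k
  simp [hF]

end Eigenspace

theorem statement5_general (n : ℕ) (lam : ℝ)
    (F : Finset (Fin n → ℤ))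
    (hF : ∀ k : Fin n → ℤ, k ∈ F ↔ euclNorm (fun i => (k i : ℝ)) = lam)
    (ι : Type) [Fintype ι] [DecidableEq ι] (c : ι → (Fin n → ℤ) → ℂ) (ψ : ι → (Fin n → ℝ) → ℂ)
    (hψ : ∀ j x, ψ j x = eigenSum F (c j) x)
    -- orthonormality in `L²(𝕋ⁿ)`
    (horth : ∀ j j' : ι,
      (∫ x in torusBox n, ψ j x * (starRingEnd ℂ) (ψ j' x)) = if j = j' then 1 else 0)
    -- completeness: as many basis vectors as the dimension of `E_λ`
    (hcard : Fintype.card ι = F.card)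
    (a : (Fin n → ℝ) → ℂ) (ha : MemLp a 2 (volume.restrict (torusBox n))) :
    ∑ j : ι,
        ‖(∫ x in torusBox n, a x * ((‖ψ j x‖ ^ 2 : ℝ) : ℂ))
            - fourierCoeff' a 0‖ ^ 2
      ≤ (2*Real.pi)^n *
        ∑' p : {p : Fin n → ℤ // p ≠ 0},
          ‖fourierCoeff' a p.1‖ ^ 2 *
            ({k : Fin n → ℤ | euclNorm (fun i => (k i : ℝ)) = lam ∧
              euclNorm (fun i => ((k i + p.1 i : ℤ) : ℝ)) = lam}.ncard : ℝ) := by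
  have hgram := coeffMatrix_mul_fourierMatrix_mul_conjTranspose F (ha.integrable one_le_two) c
  have hgram₁ := coeffMatrix_mul_fourierMatrix_mul_conjTranspose F (integrable_const 1) c
  rw [fourierMatrix_one, Matrix.mul_one] at hgram₁
  set U := coeffMatrix F c
  set M : Matrix F F ℂ := fourierMatrix F a - fourierCoeff' a 0 • 1
  have hU : U * Uᴴ = 1 := by
    ext j j'
    simp [hgram₁, ← hψ, horth, Matrix.one_apply]
  have hU' : Uᴴ * U = 1 :=
    (Matrix.mul_eq_one_comm_of_equiv (Fintype.equivOfCardEq (by simp [hcard]))).1 hU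
  have hdiag : ∀ j, (∫ x in torusBox n, a x * ((‖ψ j x‖ ^ 2 : ℝ) : ℂ)) - fourierCoeff' a 0
      = (U * M * Uᴴ) j j := by
    intro j
    rw [Matrix.mul_sub, Matrix.sub_mul, hgram, Matrix.mul_smul, Matrix.smul_mul, Matrix.mul_one, hU]
    simp [hψ, Complex.mul_conj']
  have h2pi : (1 : ℝ) ≤ (2 * Real.pi) ^ n := one_le_pow₀ (by linarith [Real.pi_gt_three])
  calc _ = ∑ j, ‖(U * M * Uᴴ) j j‖ ^ 2 := by
        simp_rw [hdiag]
    _ ≤ ∑ q ∈ F.offDiag, ‖fourierCoeff' a (q.2 - q.1)‖ ^ 2 := by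
        rw [← sum_sum_norm_sq_fourierMatrix_sub_smul_one]
        exact Matrix.sum_norm_sq_diag_mul_mul_conjTranspose_le hU' _
    _ = _ := by
        rw [Finset.sum_offDiag_sub_eq_tsum F fun p => ‖fourierCoeff' a p‖ ^ 2]
        simp_rw [ncard_sphere_inter_translate_eq_card_filter F hF]
    _ ≤ _ := le_mul_of_one_le_left (tsum_nonneg fun p => by positivity) h2pi

/-- **Variance bound on a single eigenspace of the flat torus `𝕋ⁿ`**: if `(ψ_j)_{j ∈ ι}`
is an orthonormal basis of the eigenspace `E_λ` spanned by `{e^{i k·x} : ‖k‖ = λ}`, then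
for every `a ∈ L²(𝕋ⁿ)`,
`∑_j |∫ a |ψ_j|² − â_0|² ≤ (2π)ⁿ ∑_{p ≠ 0} |â_p|² #{k : ‖k‖ = λ, ‖k + p‖ = λ}`. -/
theorem statement5 (n : ℕ) (hn : 1 ≤ n) (lam : ℝ) (hlam : 0 < lam)
    (F : Finset (Fin n → ℤ))
    (hF : ∀ k : Fin n → ℤ, k ∈ F ↔ euclNorm (fun i => (k i : ℝ)) = lam)
    (ι : Type) [Fintype ι] [DecidableEq ι] (c : ι → (Fin n → ℤ) → ℂ) (ψ : ι → (Fin n → ℝ) → ℂ)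
    (hψ : ∀ j x, ψ j x = eigenSum F (c j) x)
    -- orthonormality in `L²(𝕋ⁿ)`
    (horth : ∀ j j' : ι,
      (∫ x in torusBox n, ψ j x * (starRingEnd ℂ) (ψ j' x)) = if j = j' then 1 else 0)
    -- completeness: as many basis vectors as the dimension of `E_λ`
    (hcard : Fintype.card ι = F.card)
    (a : (Fin n → ℝ) → ℂ) (ha : MemLp a 2 (volume.restrict (torusBox n))) :
    ∑ j : ι,
        ‖(∫ x in torusBox n, a x * ((‖ψ j x‖ ^ 2 : ℝ) : ℂ))
            - fourierCoeff' a 0‖ ^ 2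
      ≤ (2*Real.pi)^n *
        ∑' p : {p : Fin n → ℤ // p ≠ 0},
          ‖fourierCoeff' a p.1‖ ^ 2 *
            ({k : Fin n → ℤ | euclNorm (fun i => (k i : ℝ)) = lam ∧
              euclNorm (fun i => ((k i + p.1 i : ℤ) : ℝ)) = lam}.ncard : ℝ) :=
  statement5_general n lam F hF ι c ψ hψ horth hcard a ha
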